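/- Every F-type icosahedral model set Λ(t,W) is aperiodic: for every v ∈ ℝ³ with v ≠ 0 one has v + Λ(t,W) ≠ Λ(t,W). -/

import Mathlib

noncomputable section

open Set

/-- The golden ratio τ = (1+√5)/2. -/
def gold : ℝ := (1 + Real.sqrt 5) / 2

/-- Euclidean 3-space. -/
abbrev E3 := EuclideanSpace ℝ (Fin 3)

/-- Membership in ℚ(τ) ⊂ ℝ. -/
def inQtau (x : ℝ) : Prop := ∃ p q : ℚ, x = (p : ℝ) + (q : ℝ) * gold

open Classical in
/-- The Galois conjugation on ℚ(τ) ⊂ ℝ, determined by √5 ↦ -√5, i.e. τ ↦ 1-τ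
(extended by 0 outside ℚ(τ)). -/
def conjTau (x : ℝ) : ℝ :=
  if h : ∃ p q : ℚ, x = (p : ℝ) + (q : ℝ) * gold then
    ((Classical.choose h : ℚ) : ℝ) +
      ((Classical.choose (Classical.choose_spec h) : ℚ) : ℝ) * (1 - gold)
  else 0

/-- The ring ℤ[τ] = ℤ ⊕ ℤτ ⊂ ℝ. -/
def Ztau : Set ℝ := {x | ∃ m n : ℤ, x = (m : ℝ) + (n : ℝ) * gold}

/-- The standard face-centred icosahedral module M_F. -/
def MF : Set E3 :=
  {v | ∃ a b c : ℝ, a ∈ Ztau ∧ b ∈ Ztau ∧ c ∈ Ztau ∧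
    v = a • (WithLp.toLp 2 ![2, 0, 0] : E3) + b • (WithLp.toLp 2 ![gold + 1, gold, 1] : E3) +
      c • (WithLp.toLp 2 ![0, 0, 2] : E3)}

/-- L := (1/2)·M_F. -/
def Lset : Set E3 := {v | (2 : ℝ) • v ∈ MF}

/-- The star map: coordinatewise Galois conjugation. -/
def starMap (v : E3) : E3 := WithLp.toLp 2 (fun i => conjTau (v i) : Fin 3 → ℝ)

/-- A window: ∅ ≠ int W ⊆ W ⊆ cl(int W) with cl(int W) compact. -/
def IsWindow (W : Set E3) : Prop :=
  (interior W).Nonempty ∧ W ⊆ closure (interior W) ∧ IsCompact (closure (interior W))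

/-- The F-type icosahedral model set Λ(t,W). -/
def modelSet (t : E3) (W : Set E3) : Set E3 :=
  {x | ∃ α ∈ Lset, starMap α ∈ W ∧ x = t + α}

/-- Genericity of the window: ∂W ∩ L* = ∅. -/
def IsGeneric (W : Set E3) : Prop := frontier W ∩ (starMap '' Lset) = ∅

/-- The line through p in direction u. -/
def lineThrough (p u : E3) : Set E3 := {x | ∃ r : ℝ, x = p + r • u}

/-- An L-direction: a unit vector parallel to a nonzero element of L. -/
def IsLDir (u : E3) : Prop :=
  u ∈ Metric.sphere (0 : E3) 1 ∧ ∃ v ∈ Lset, v ≠ 0 ∧ ∃ c : ℝ, u = c • v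

/-- An L^{(τ,0,1)}-direction: an L-direction orthogonal to (τ,0,1). -/
def IsLTauDir (u : E3) : Prop :=
  IsLDir u ∧ gold * u 0 + u 2 = 0

/-- A set of pairwise non-parallel directions. -/
def PairwiseNonParallel (U : Set E3) : Prop :=
  U.Pairwise fun u v => ¬ ∃ c : ℝ, u = c • v

/-- Two finite sets have the same X-ray in direction u. -/
def XRayEq (F G : Set E3) (u : E3) : Prop :=
  ∀ p : E3, (F ∩ lineThrough p u).ncard = (G ∩ lineThrough p u).ncard

/-- C is a (finite) convex subset of Λ, i.e. C = conv(C) ∩ Λ. -/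
def ConvexSubset (Λ C : Set E3) : Prop :=
  C.Finite ∧ C ⊆ Λ ∧ C = convexHull ℝ C ∩ Λ

/-- A collection of finite sets is determined by the X-rays in the directions of U. -/
def DeterminedBy (𝒞 : Set (Set E3)) (U : Set E3) : Prop :=
  ∀ F₁ ∈ 𝒞, ∀ F₂ ∈ 𝒞, (∀ u ∈ U, XRayEq F₁ F₂ u) → F₁ = F₂

/-! ### Auxiliary lemmas -/

lemma gold_irr : Irrational gold := Real.goldenRatio_irrational

lemma goldSq : gold ^ 2 = gold + 1 := Real.goldenRatio_sq

lemma goldGT1 : 1 < gold := by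
  have h5 : (2:ℝ) < Real.sqrt 5 := by
    nlinarith [Real.sq_sqrt (by norm_num : (0:ℝ) ≤ 5), Real.sqrt_nonneg 5]
  rw [gold]; linarith

lemma goldLT2 : gold < 2 := by
  have h5 : Real.sqrt 5 < 3 := by
    nlinarith [Real.sq_sqrt (by norm_num : (0:ℝ) ≤ 5), Real.sqrt_nonneg 5]
  rw [gold]; linarith

lemma lin_indep {p q : ℚ} (h : (p : ℝ) + (q : ℝ) * gold = 0) : p = 0 ∧ q = 0 := by
  by_cases hq : q = 0
  · subst hq; simp at h; exact ⟨by exact_mod_cast h, rfl⟩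
  · exfalso
    apply gold_irr
    refine ⟨-p / q, ?_⟩
    push_cast
    field_simp at h ⊢
    linarith

lemma lin_indep' {p q : ℚ} (h : (p : ℝ) + (q : ℝ) * (1 - gold) = 0) : p = 0 ∧ q = 0 := by
  have h2 : ((p + q : ℚ) : ℝ) + ((-q : ℚ) : ℝ) * gold = 0 := by push_cast; ring_nf; linarith
  obtain ⟨h3, h4⟩ := lin_indep h2
  constructor
  · have : q = 0 := by linarith [neg_eq_zero.mp h4]
    simpa [this] using h3
  · simpa using h4

lemma conjTau_eq (p q : ℚ) : conjTau ((p : ℝ) + (q : ℝ) * gold) = (p : ℝ) + (q : ℝ) * (1 - gold) := by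
  have h : ∃ p' q' : ℚ, (p : ℝ) + (q : ℝ) * gold = (p' : ℝ) + (q' : ℝ) * gold := ⟨p, q, rfl⟩
  rw [conjTau, dif_pos h]
  set p' := Classical.choose h with hp'
  set q' := Classical.choose (Classical.choose_spec h) with hq'
  have hspec : (p : ℝ) + (q : ℝ) * gold = (p' : ℝ) + (q' : ℝ) * gold :=
    Classical.choose_spec (Classical.choose_spec h)
  have : ((p - p' : ℚ) : ℝ) + ((q - q' : ℚ) : ℝ) * gold = 0 := by push_cast; linarith
  obtain ⟨h1, h2⟩ := lin_indep this
  have e1 : p = p' := by linarith [sub_eq_zero.mp h1]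
  have e2 : q = q' := by linarith [sub_eq_zero.mp h2]
  rw [← hp', ← e1, ← e2]

lemma star_apply_of_rep {x : ℝ} (p q : ℚ) (h : x = (p : ℝ) + (q : ℝ) * gold) :
    conjTau x = (p : ℝ) + (q : ℝ) * (1 - gold) := by rw [h, conjTau_eq]

lemma dense_Ztau (x : ℝ) {ε : ℝ} (hε : 0 < ε) :
    ∃ m n : ℤ, |((m : ℝ) + (n : ℝ) * gold) - x| < ε := by
  rcases AddSubgroup.dense_or_cyclic (AddSubgroup.closure ({1, gold} : Set ℝ)) with hd | ⟨a, ha⟩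
  · obtain ⟨y, hyb, hyS⟩ := Metric.dense_iff.mp hd x ε hε
    obtain ⟨m, n, hmn⟩ := AddSubgroup.mem_closure_pair.mp hyS
    refine ⟨m, n, ?_⟩
    have : (m : ℝ) + (n : ℝ) * gold = y := by rw [← hmn]; push_cast [zsmul_eq_mul]; ring
    rw [this]
    have h2 := Metric.mem_ball.mp hyb
    rw [Real.dist_eq] at h2
    exact h2
  · exfalso
    have h1 : (1 : ℝ) ∈ AddSubgroup.closure ({1, gold} : Set ℝ) :=
      AddSubgroup.subset_closure (by simp)
    have h2 : gold ∈ AddSubgroup.closure ({1, gold} : Set ℝ) :=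
      AddSubgroup.subset_closure (by simp)
    rw [ha, AddSubgroup.mem_closure_singleton] at h1 h2
    obtain ⟨k, hk⟩ := h1
    obtain ⟨l, hl⟩ := h2
    have hk0 : (k : ℝ) ≠ 0 := by
      intro h; rw [zsmul_eq_mul, h, zero_mul] at hk; norm_num at hk
    apply gold_irr
    refine ⟨(l : ℚ) / (k : ℚ), ?_⟩
    rw [zsmul_eq_mul] at hk hl
    push_cast
    have hk0' : (k : ℚ) ≠ 0 := by exact_mod_cast fun h => hk0 (by exact_mod_cast h)
    field_simp
    linear_combination (-(l:ℝ)) * hk + ((k:ℝ)) * hl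

lemma comb_apply (a b c : ℝ) :
    (a • (WithLp.toLp 2 ![2, 0, 0] : E3) + b • (WithLp.toLp 2 ![gold + 1, gold, 1] : E3) + c • (WithLp.toLp 2 ![0, 0, 2] : E3)) 0
        = 2 * a + b * (gold + 1) ∧
    (a • (WithLp.toLp 2 ![2, 0, 0] : E3) + b • (WithLp.toLp 2 ![gold + 1, gold, 1] : E3) + c • (WithLp.toLp 2 ![0, 0, 2] : E3)) 1
        = b * gold ∧
    (a • (WithLp.toLp 2 ![2, 0, 0] : E3) + b • (WithLp.toLp 2 ![gold + 1, gold, 1] : E3) + c • (WithLp.toLp 2 ![0, 0, 2] : E3)) 2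
        = b + 2 * c := by
  refine ⟨?_, ?_, ?_⟩ <;> simp [PiLp.add_apply, PiLp.smul_apply] <;> ring

lemma rep_of_mem {v : E3} (hv : v ∈ Lset) :
    ∀ i : Fin 3, ∃ p q : ℚ, v i = (p : ℝ) + (q : ℝ) * gold := by
  obtain ⟨a, b, c, ⟨m1, n1, ha⟩, ⟨m2, n2, hb⟩, ⟨m3, n3, hc⟩, h2⟩ := hv
  have hg := goldSq
  obtain ⟨e0, e1, e2⟩ := comb_apply a b c
  have k0 := congrArg (fun x : E3 => x 0) h2
  have k1 := congrArg (fun x : E3 => x 1) h2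
  have k2 := congrArg (fun x : E3 => x 2) h2
  rw [e0] at k0; rw [e1] at k1; rw [e2] at k2
  have s0 : (2:ℝ) * v 0 = 2 * a + b * (gold + 1) := k0
  have s1 : (2:ℝ) * v 1 = b * gold := k1
  have s2 : (2:ℝ) * v 2 = b + 2 * c := k2
  subst ha hb hc
  intro i
  fin_cases i
  · refine ⟨(2*m1+m2+n2)/2, (2*n1+m2+2*n2)/2, ?_⟩
    show v 0 = _
    push_cast
    linear_combination s0 / 2 + ((n2:ℝ)/2) * hg
  · refine ⟨n2/2, (m2+n2)/2, ?_⟩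
    show v 1 = _
    push_cast
    linear_combination s1 / 2 + ((n2:ℝ)/2) * hg
  · refine ⟨(m2+2*m3)/2, (n2+2*n3)/2, ?_⟩
    show v 2 = _
    push_cast
    linear_combination s2 / 2

lemma abs_coord_le (x : E3) (i : Fin 3) : |x i| ≤ ‖x‖ := by
  rw [EuclideanSpace.norm_eq]
  rw [show |x i| = Real.sqrt (‖x i‖ ^ 2) by rw [Real.sqrt_sq_eq_abs]; simp]
  apply Real.sqrt_le_sqrt
  exact Finset.single_le_sum (f := fun j => ‖x j‖ ^ 2) (fun j _ => by positivity) (Finset.mem_univ i)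

/-- Density of the star image of L. -/
lemma dense_starL (w : E3) {ε : ℝ} (hε : 0 < ε) :
    ∃ α ∈ Lset, dist (starMap α) w < ε := by
  have hg := goldSq
  have h1g : |1 - gold| < 1 := by
    rw [abs_lt]; constructor <;> [linarith [goldLT2]; linarith [goldGT1]]
  have h1g0 : (1 : ℝ) - gold ≠ 0 := by linarith [goldGT1]
  set δ := ε / 2 with hδ
  have hδ0 : 0 < δ := by positivity
  -- choose b' ∈ ℤ[gold] with |b'(1-gold)/2 - w 1| < δ/2
  obtain ⟨mb, nb, hb⟩ := dense_Ztau (2 * w 1 / (1 - gold)) hδ0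
  set b' : ℝ := (mb : ℝ) + (nb : ℝ) * gold with hb'def
  clear_value b'
  have hbclose : |b' * (1 - gold) / 2 - w 1| < δ := by
    have : b' * (1 - gold) / 2 - w 1 = (b' - 2 * w 1 / (1 - gold)) * ((1 - gold) / 2) := by
      field_simp
    rw [this, abs_mul]
    have hfac : |(1 - gold) / 2| ≤ 1 := by
      rw [abs_div, abs_two]; linarith [h1g]
    calc |b' - 2 * w 1 / (1 - gold)| * |(1 - gold) / 2|
        ≤ |b' - 2 * w 1 / (1 - gold)| * 1 :=
          mul_le_mul_of_nonneg_left hfac (abs_nonneg _)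
      _ < δ := by rw [mul_one]; exact hb
  -- choose a' with |a' + b'(2-gold)/2 - w 0| < δ
  obtain ⟨ma, na, hA⟩ := dense_Ztau (w 0 - b' * (2 - gold) / 2) hδ0
  set a' : ℝ := (ma : ℝ) + (na : ℝ) * gold with ha'def
  clear_value a'
  have haclose : |a' + b' * (2 - gold) / 2 - w 0| < δ := by
    have : a' + b' * (2 - gold) / 2 - w 0 = a' - (w 0 - b' * (2 - gold) / 2) := by ring
    rw [this]; exact hA
  -- choose c' with |b'/2 + c' - w 2| < δ
  obtain ⟨mc, nc, hC⟩ := dense_Ztau (w 2 - b' / 2) hδ0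
  set c' : ℝ := (mc : ℝ) + (nc : ℝ) * gold with hc'def
  clear_value c'
  have hcclose : |b' / 2 + c' - w 2| < δ := by
    have : b' / 2 + c' - w 2 = c' - (w 2 - b' / 2) := by ring
    rw [this]; exact hC
  -- the module element whose star has coordinates (a', b', c')-combination
  set a : ℝ := ((ma + na : ℤ) : ℝ) + ((-na : ℤ) : ℝ) * gold with hadef
  set b : ℝ := ((mb + nb : ℤ) : ℝ) + ((-nb : ℤ) : ℝ) * gold with hbdef
  set c : ℝ := ((mc + nc : ℤ) : ℝ) + ((-nc : ℤ) : ℝ) * gold with hcdef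
  set α : E3 := (2 : ℝ)⁻¹ • (a • (WithLp.toLp 2 ![2, 0, 0] : E3) + b • (WithLp.toLp 2 ![gold + 1, gold, 1] : E3)
      + c • (WithLp.toLp 2 ![0, 0, 2] : E3)) with hαdef
  clear_value a b c α
  have hαL : α ∈ Lset := by
    show (2:ℝ) • α ∈ MF
    refine ⟨a, b, c, ⟨ma + na, -na, hadef⟩, ⟨mb + nb, -nb, hbdef⟩, ⟨mc + nc, -nc, hcdef⟩, ?_⟩
    rw [hαdef, smul_smul]
    norm_num
  obtain ⟨e0, e1, e2⟩ := comb_apply a b c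
  have hα0 : α 0 = (2 * a + b * (gold + 1)) / 2 := by
    rw [hαdef]
    show (2:ℝ)⁻¹ * _ = _
    exact (congrArg (fun r => (2:ℝ)⁻¹ * r) e0).trans (by ring)
  have hα1 : α 1 = (b * gold) / 2 := by
    rw [hαdef]
    show (2:ℝ)⁻¹ * _ = _
    exact (congrArg (fun r => (2:ℝ)⁻¹ * r) e1).trans (by ring)
  have hα2 : α 2 = (b + 2 * c) / 2 := by
    rw [hαdef]
    show (2:ℝ)⁻¹ * _ = _
    exact (congrArg (fun r => (2:ℝ)⁻¹ * r) e2).trans (by ring)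
  -- star coordinates
  have hs0 : starMap α 0 = a' + b' * (2 - gold) / 2 := by
    show conjTau (α 0) = _
    rw [star_apply_of_rep ((2*(ma+na)+(mb+nb)+(-nb))/2 : ℚ) ((2*(-na)+(mb+nb)+2*(-nb))/2 : ℚ)
      (by rw [hα0, hadef, hbdef]; push_cast; linear_combination ((-nb:ℝ)/2) * hg)]
    rw [ha'def, hb'def]; push_cast
    linear_combination ((nb:ℝ)/2) * hg
  have hs1 : starMap α 1 = b' * (1 - gold) / 2 := by
    show conjTau (α 1) = _
    rw [star_apply_of_rep ((-nb)/2 : ℚ) (((mb+nb)+(-nb))/2 : ℚ)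
      (by rw [hα1, hbdef]; push_cast; linear_combination ((-nb:ℝ)/2) * hg)]
    rw [hb'def]; push_cast
    linear_combination ((nb:ℝ)/2) * hg
  have hs2 : starMap α 2 = b' / 2 + c' := by
    show conjTau (α 2) = _
    rw [star_apply_of_rep (((mb+nb)+2*(mc+nc))/2 : ℚ) (((-nb)+2*(-nc))/2 : ℚ)
      (by rw [hα2, hbdef, hcdef]; push_cast; ring)]
    rw [hb'def, hc'def]; push_cast
    ring
  refine ⟨α, hαL, ?_⟩
  rw [EuclideanSpace.dist_eq, Real.sqrt_lt' hε, Fin.sum_univ_three,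
    Real.dist_eq, Real.dist_eq, Real.dist_eq, hs0, hs1, hs2]
  obtain ⟨p0, p0'⟩ := abs_lt.mp haclose
  obtain ⟨p1, p1'⟩ := abs_lt.mp hbclose
  obtain ⟨p2, p2'⟩ := abs_lt.mp hcclose
  have hδε : δ = ε / 2 := hδ
  have hδ2 : δ ^ 2 = ε ^ 2 / 4 := by rw [hδε]; ring
  have q0 : (a' + b' * (2 - gold) / 2 - w 0) ^ 2 < δ ^ 2 := sq_lt_sq' p0 p0'
  have q1 : (b' * (1 - gold) / 2 - w 1) ^ 2 < δ ^ 2 := sq_lt_sq' p1 p1'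
  have q2 : (b' / 2 + c' - w 2) ^ 2 < δ ^ 2 := sq_lt_sq' p2 p2'
  have hε2 : 0 < ε ^ 2 := by positivity
  simp only [sq_abs]
  linarith [q0, q1, q2, hδ2, hε2]

/-- every F-type icosahedral model set is aperiodic: no nonzero
translation maps it onto itself. -/
theorem modelSet_aperiodic :
    ∀ (t : E3) (W : Set E3), IsWindow W →
      ∀ v : E3, v ≠ 0 → (fun x => v + x) '' modelSet t W ≠ modelSet t W := by
  intro t W hW v hv heq
  obtain ⟨hne, hsub, hcomp⟩ := hW
  obtain ⟨w, hw⟩ := hne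
  obtain ⟨ε, hε, hball⟩ := Metric.isOpen_iff.mp isOpen_interior w hw
  obtain ⟨α, hαL, hαdist⟩ := dense_starL w hε
  have hαW : starMap α ∈ W := interior_subset (hball (Metric.mem_ball.mpr hαdist))
  obtain ⟨C, hC⟩ := isBounded_iff_forall_norm_le.mp hcomp.isBounded
  have hCW : ∀ x ∈ W, ∀ i : Fin 3, |x i| ≤ C := fun x hx i =>
    (abs_coord_le x i).trans (hC x (hsub hx))
  have key : ∀ n : ℕ, ∃ β ∈ Lset, starMap β ∈ W ∧ β = α + (n : ℝ) • v := by
    intro n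
    induction n with
    | zero => exact ⟨α, hαL, hαW, by simp⟩
    | succ n ih =>
      obtain ⟨β, hβL, hβW, hβ⟩ := ih
      have hmem : t + β ∈ modelSet t W := ⟨β, hβL, hβW, rfl⟩
      have hmem2 : v + (t + β) ∈ modelSet t W := by
        rw [← heq]; exact ⟨t + β, hmem, rfl⟩
      obtain ⟨γ, hγL, hγW, hγ⟩ := hmem2
      refine ⟨γ, hγL, hγW, ?_⟩
      have hγ2 : γ = v + β := by
        have h3 : t + (v + β) = t + γ := by rw [← hγ]; abel
        exact (add_left_cancel h3).symm
      rw [hγ2, hβ]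
      push_cast
      rw [add_smul, one_smul]
      abel
  obtain ⟨β, hβL, hβW, hβ⟩ := key 1
  have repα := rep_of_mem hαL
  have repβ := rep_of_mem hβL
  have coord : ∀ i : Fin 3, v i = 0 := by
    intro i
    obtain ⟨p, q, hpq⟩ := repα i
    obtain ⟨p1, q1, hpq1⟩ := repβ i
    have hβi : β i = α i + v i := by
      have h4 := congrArg (fun x : E3 => x i) hβ
      simpa using h4
    have hvrep : v i = ((p1 - p : ℚ) : ℝ) + ((q1 - q : ℚ) : ℝ) * gold := by
      push_cast
      linear_combination hpq1 - hpq - hβi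
    set d : ℝ := ((p1 - p : ℚ) : ℝ) + ((q1 - q : ℚ) : ℝ) * (1 - gold) with hd
    have hbound : ∀ n : ℕ, (n : ℝ) * |d| ≤ 2 * C := by
      intro n
      obtain ⟨βn, hβnL, hβnW, hβn⟩ := key n
      have hβni : βn i = α i + (n : ℝ) * v i := by
        have h4 := congrArg (fun x : E3 => x i) hβn
        simpa using h4
      have hrepn : βn i = ((p + n * (p1 - p) : ℚ) : ℝ) + ((q + n * (q1 - q) : ℚ) : ℝ) * gold := by
        rw [hβni, hpq, hvrep]; push_cast; ring
      have hsn := star_apply_of_rep _ _ hrepn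
      have hsα := star_apply_of_rep _ _ hpq
      have h1 : |conjTau (βn i)| ≤ C := hCW _ hβnW i
      have h2 : |conjTau (α i)| ≤ C := hCW _ hαW i
      have hdiff : conjTau (βn i) - conjTau (α i) = (n : ℝ) * d := by
        rw [hsn, hsα, hd]; push_cast; ring
      calc (n : ℝ) * |d| = |conjTau (βn i) - conjTau (α i)| := by
            rw [hdiff, abs_mul, Nat.abs_cast]
        _ ≤ |conjTau (βn i)| + |conjTau (α i)| := abs_sub _ _
        _ ≤ 2 * C := by linarith
    have hd0 : d = 0 := by
      by_contra hne0
      have hpos : 0 < |d| := abs_pos.mpr hne0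
      obtain ⟨n, hn⟩ := exists_nat_gt ((2 * C) / |d|)
      have hb := hbound n
      rw [div_lt_iff₀ hpos] at hn
      linarith
    obtain ⟨hP, hQ⟩ := lin_indep' hd0
    rw [hvrep, hP, hQ]
    simp
  apply hv
  ext i
  simpa using coord i

end
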